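/- ZO-SGD per-step bound: suppose L is L-smooth and the zeroth-order estimator satisfies E[‖ĝ(w)‖²] ≤ 2(d+4)(‖∇L(w)‖² + γ²) + (μ²/2)L²(d+6)³ and E[ĝ(w)] = ∇L(w). If the step size satisfies η ≤ 1/(2L(d+4)), then the update w_{t+1} = w_t − ηĝ(w_t) satisfies E[L(w_{t+1}) | w_t] ≤ L(w_t) − (η/2)‖∇L(w_t)‖² + Lη²(γ²(d+4) + (L²μ²/4)(d+6)³). -/

import Mathlib

/-!
Along the segment from `w` to `y = w + v`, the gap between `f` and its first-order model with
curvature `L`, `t ↦ f (w + t v) - t ⟪∇f w, v⟫ - (L/2) t² ‖v‖²`, has derivative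
`⟪∇f (w + t v) - ∇f w, v⟫ - L t ‖v‖² ≤ 0`; comparing its values at `0` and `1` gives the descent
lemma. Applied at `y = w - η ĝ` and integrated against the law of `ĝ`, unbiasedness turns the
linear term into `-η ‖∇f w‖²`, and by the second-moment bound together with `L η (d + 4) ≤ 1/2`
the quadratic term costs at most half of it.
-/

open MeasureTheory RealInnerProductSpace

section Descent

variable {F : Type*} [NormedAddCommGroup F] [InnerProductSpace ℝ F] [CompleteSpace F]

theorem HasGradientAt.hasDerivAt_comp_add_smul {f : F → ℝ} {f' w v : F} {t : ℝ}
    (h : HasGradientAt f f' (w + t • v)) :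
    HasDerivAt (fun s : ℝ => f (w + s • v)) ⟪f', v⟫ t := by
  have hline : HasDerivAt (fun s : ℝ => w + s • v) v t := by
    simpa using ((hasDerivAt_id t).smul_const v).const_add w
  simpa [InnerProductSpace.toDual_apply_apply, Function.comp_def] using
    h.hasFDerivAt.comp_hasDerivAt t hline

theorem descent_lemma {f : F → ℝ} {g : F → F} (hgrad : ∀ x, HasGradientAt f (g x) x)
    {L : ℝ} (hlip : ∀ x y, ‖g x - g y‖ ≤ L * ‖x - y‖) (w y : F) :
    f y ≤ f w + ⟪g w, y - w⟫ + L / 2 * ‖y - w‖ ^ 2 := by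
  set v := y - w
  let φ : ℝ → ℝ := fun t => f (w + t • v) - t * ⟪g w, v⟫ - L / 2 * t ^ 2 * ‖v‖ ^ 2
  have hφ : ∀ t, HasDerivAt φ (⟪g (w + t • v) - g w, v⟫ - L * t * ‖v‖ ^ 2) t := by
    intro t
    refine ((((hgrad (w + t • v)).hasDerivAt_comp_add_smul (w := w) (v := v)).sub
      ((hasDerivAt_id t).mul_const ⟪g w, v⟫)).sub
      (((hasDerivAt_pow 2 t).const_mul (L / 2)).mul_const (‖v‖ ^ 2))).congr_deriv ?_
    rw [inner_sub_left, Nat.cast_ofNat, pow_one, one_mul]; ring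
  have hφ' : ∀ t ∈ interior (Set.Ici (0 : ℝ)), ⟪g (w + t • v) - g w, v⟫ - L * t * ‖v‖ ^ 2 ≤ 0 := by
    intro t ht
    rw [interior_Ici] at ht
    refine sub_nonpos.2 ?_
    calc ⟪g (w + t • v) - g w, v⟫ ≤ ‖g (w + t • v) - g w‖ * ‖v‖ := real_inner_le_norm _ _
      _ ≤ L * ‖t • v‖ * ‖v‖ := by
          gcongr
          simpa using hlip (w + t • v) w
      _ = L * t * ‖v‖ ^ 2 := by
          rw [norm_smul, Real.norm_of_nonneg (le_of_lt ht)]; ring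
  have hanti : AntitoneOn φ (Set.Ici 0) :=
    antitoneOn_of_hasDerivWithinAt_nonpos (convex_Ici 0)
      (fun t _ => (hφ t).continuousAt.continuousWithinAt)
      (fun t _ => (hφ t).hasDerivWithinAt) hφ'
  have := hanti (Set.mem_Ici.2 le_rfl) (Set.mem_Ici.2 zero_le_one) zero_le_one
  simp only [φ, v, one_smul, zero_smul, add_zero, add_sub_cancel, one_mul, one_pow, zero_mul,
    ne_eq, OfNat.ofNat_ne_zero, not_false_eq_true, zero_pow, mul_zero, sub_zero] at this
  linarith

theorem integral_descent_lemma [MeasurableSpace F] {f : F → ℝ} {g : F → F} (hgrad : ∀ x, HasGradientAt f (g x) x)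
    {L : ℝ} (hlip : ∀ x y, ‖g x - g y‖ ≤ L * ‖x - y‖) (w : F) (η : ℝ)
    {ν : Measure F} [IsProbabilityMeasure ν] (hint1 : Integrable (fun x => x) ν)
    (hint2 : Integrable (fun x => ‖x‖ ^ 2) ν) (hint3 : Integrable (fun x => f (w - η • x)) ν) :
    ∫ x, f (w - η • x) ∂ν ≤ f w - η * ⟪g w, ∫ x, x ∂ν⟫ + L / 2 * η ^ 2 * ∫ x, ‖x‖ ^ 2 ∂ν := by
  have hstep (x : F) : f (w - η • x) ≤ f w - η * ⟪g w, x⟫ + L / 2 * η ^ 2 * ‖x‖ ^ 2 := by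
    have h := descent_lemma hgrad hlip w (w - η • x)
    rwa [sub_sub_cancel_left, inner_neg_right, real_inner_smul_right, norm_neg, norm_smul,
      Real.norm_eq_abs, mul_pow, sq_abs, ← sub_eq_add_neg, ← mul_assoc] at h
  have hinner : Integrable (fun x => η * ⟪g w, x⟫) ν := (hint1.const_inner (g w)).const_mul η
  have hlinear : Integrable (fun x => f w - η * ⟪g w, x⟫) ν := (integrable_const _).sub hinner
  calc ∫ x, f (w - η • x) ∂ν
      ≤ ∫ x, (f w - η * ⟪g w, x⟫ + L / 2 * η ^ 2 * ‖x‖ ^ 2) ∂ν :=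
        integral_mono hint3 (hlinear.add (hint2.const_mul _)) hstep
    _ = f w - η * ⟪g w, ∫ x, x ∂ν⟫ + L / 2 * η ^ 2 * ∫ x, ‖x‖ ^ 2 ∂ν := by
        rw [integral_add hlinear (hint2.const_mul _),
          integral_sub (integrable_const _) hinner, integral_const_mul, integral_const_mul,
          integral_inner hint1, integral_const, probReal_univ, one_smul]

end Descent

/-- `ν` is the distribution of the estimator `ĝ(w)`. -/
theorem zo_sgd_per_step_bound_general (d : ℕ)
    (f : EuclideanSpace ℝ (Fin d) → ℝ)
    (g : EuclideanSpace ℝ (Fin d) → EuclideanSpace ℝ (Fin d))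
    (hgrad : ∀ x, HasGradientAt f (g x) x)
    (L : ℝ) (hL : 0 < L) (hlip : ∀ x y, ‖g x - g y‖ ≤ L * ‖x - y‖)
    (γ μ η : ℝ) (hη : 0 < η)
    (hηle : η ≤ 1 / (2 * L * (d + 4)))
    (w : EuclideanSpace ℝ (Fin d))
    (ν : Measure (EuclideanSpace ℝ (Fin d))) [IsProbabilityMeasure ν]
    (hmean : ∫ x, x ∂ν = g w)
    (hint1 : Integrable (fun x => x) ν)
    (hint2 : Integrable (fun x => ‖x‖ ^ 2) ν)
    (hint3 : Integrable (fun x => f (w - η • x)) ν)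
    (hvar : ∫ x, ‖x‖ ^ 2 ∂ν ≤
      2 * (d + 4) * (‖g w‖ ^ 2 + γ ^ 2) + (μ ^ 2 / 2) * L ^ 2 * (d + 6) ^ 3) :
    ∫ x, f (w - η • x) ∂ν ≤
      f w - (η / 2) * ‖g w‖ ^ 2
        + L * η ^ 2 * (γ ^ 2 * (d + 4) + (L ^ 2 * μ ^ 2 / 4) * (d + 6) ^ 3) := by
  have hstep := integral_descent_lemma hgrad hlip w η hint1 hint2 hint3
  rw [hmean, real_inner_self_eq_norm_sq] at hstep
  have hηL : L * η * (d + 4) ≤ 1 / 2 := by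
    rw [le_div_iff₀ (by positivity)] at hηle
    nlinarith
  linear_combination hstep + (L / 2 * η ^ 2) * hvar + (η * ‖g w‖ ^ 2) * hηL

/-- ZO-SGD per-step bound: with an unbiased zeroth-order gradient estimator whose second
moment satisfies the Gaussian-smoothing bound, and step size `η ≤ 1/(2L(d+4))`, one step
of ZO-SGD satisfies the stated expected descent inequality.
`ν` is the distribution of the estimator `ĝ(w)`. -/
theorem zo_sgd_per_step_bound (d : ℕ)
    (f : EuclideanSpace ℝ (Fin d) → ℝ)
    (g : EuclideanSpace ℝ (Fin d) → EuclideanSpace ℝ (Fin d))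
    (hgrad : ∀ x, HasGradientAt f (g x) x)
    (L : ℝ) (hL : 0 < L) (hlip : ∀ x y, ‖g x - g y‖ ≤ L * ‖x - y‖)
    (γ μ η : ℝ) (hμ : 0 < μ) (hη : 0 < η)
    (hηle : η ≤ 1 / (2 * L * (d + 4)))
    (w : EuclideanSpace ℝ (Fin d))
    (ν : Measure (EuclideanSpace ℝ (Fin d))) [IsProbabilityMeasure ν]
    (hmean : ∫ x, x ∂ν = g w)
    (hint1 : Integrable (fun x => x) ν)
    (hint2 : Integrable (fun x => ‖x‖ ^ 2) ν)
    (hint3 : Integrable (fun x => f (w - η • x)) ν)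
    (hvar : ∫ x, ‖x‖ ^ 2 ∂ν ≤
      2 * (d + 4) * (‖g w‖ ^ 2 + γ ^ 2) + (μ ^ 2 / 2) * L ^ 2 * (d + 6) ^ 3) :
    ∫ x, f (w - η • x) ∂ν ≤
      f w - (η / 2) * ‖g w‖ ^ 2
        + L * η ^ 2 * (γ ^ 2 * (d + 4) + (L ^ 2 * μ ^ 2 / 4) * (d + 6) ^ 3) :=
  zo_sgd_per_step_bound_general d f g hgrad L hL hlip γ μ η hη hηle w ν hmean hint1 hint2 hint3 hvar
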